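/- Let g : ℝ^d → [0,∞) be measurable with ∫exp(−βg(θ))dθ < ∞ for every β > 0, and let α > 0. Then C(α) := 1 + ∫∫_{ℝ^d×ℝ^d} (1 + αg(θ) + α|r|²/2) e^{−1 − αg(θ) − α|r|²/2} dθ dr is finite, and for every probability density ρ on ℝ^d × ℝ^d one has ∫∫ ρ log⁻ρ dθdr ≤ α ∫∫ (g(θ) + |r|²/2) ρ dθdr + C(α), where log⁻x := max{−log x, 0} (with x log⁻x := 0 at x = 0) and both sides are valued in [0,∞]. (Key entropy estimate in the proof of Proposition B.1.) -/

import Mathlib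

/-!
The pointwise Fenchel–Young inequality `-x log x ≤ V x + e^{-1-V}` (the Legendre dual of
`x ↦ x log x` is `V ↦ e^{V-1}`), applied with the potential `V = α (g(θ) + |r|²/2) ≥ 0` and
integrated, bounds the negative part of the entropy by `α ∫ (g + |r|²/2) ρ + ∫ e^{-1-V}`.
The last integral is at most `∫ (1 + V) e^{-1-V}`, which is finite because
`(1 + V) e^{-1-V} ≤ 2 e^{-V/2} = 2 e^{-α g(θ)/2} e^{-α |r|²/4}`.
-/

open MeasureTheory Real
open scoped ENNReal

lemma Real.neg_mul_log_le_mul_add_exp {x : ℝ} (hx : 0 ≤ x) (V : ℝ) :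
    -(x * log x) ≤ V * x + exp (-1 - V) := by
  rcases hx.eq_or_lt with rfl | hx
  · simpa using (exp_pos _).le
  have key : x * log (exp (-1 - V) / x) ≤ x * (exp (-1 - V) / x - 1) :=
    mul_le_mul_of_nonneg_left (log_le_sub_one_of_pos (by positivity)) hx.le
  rw [log_div (exp_pos _).ne' hx.ne', log_exp, mul_sub x (exp (-1 - V) / x) 1,
    mul_div_cancel₀ _ hx.ne'] at key
  linarith

lemma Real.mul_max_neg_log_le {x V : ℝ} (hx : 0 ≤ x) (hV : 0 ≤ V) :
    x * max (-log x) 0 ≤ V * x + exp (-1 - V) := by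
  rw [mul_max_of_nonneg _ _ hx, mul_zero, mul_neg]
  exact max_le (neg_mul_log_le_mul_add_exp hx V) (by positivity)

lemma Real.one_add_mul_exp_neg_one_sub_le (t : ℝ) :
    (1 + t) * exp (-1 - t) ≤ 2 * exp (-(t / 2)) :=
  calc (1 + t) * exp (-1 - t) ≤ (2 * exp (t / 2)) * exp (-t) := by
        gcongr
        · linarith [add_one_le_exp (t / 2)]
        · linarith
    _ = 2 * exp (-(t / 2)) := by rw [mul_assoc, ← exp_add]; ring_nf

lemma integrable_exp_neg_mul_norm_sq {E : Type*} [NormedAddCommGroup E] [InnerProductSpace ℝ E]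
    [FiniteDimensional ℝ E] [MeasurableSpace E] [BorelSpace E] {b : ℝ} (hb : 0 < b) :
    Integrable fun v : E => exp (-b * ‖v‖ ^ 2) := by
  refine (GaussianFourier.integrable_cexp_neg_mul_sq_norm_add (V := E)
    (b := (b : ℂ)) (by simpa using hb) 0 0).norm.congr (.of_forall fun v => ?_)
  simp only [Complex.norm_exp, zero_mul, add_zero]
  norm_cast

namespace MeasureTheory

variable {Ω : Type*} [MeasurableSpace Ω] {μ : Measure Ω} {V : Ω → ℝ}

lemma Integrable.one_add_mul_exp_neg_one_sub (hV : Measurable V) (hV0 : 0 ≤ V)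
    (h : Integrable (fun x => exp (-(V x / 2))) μ) :
    Integrable (fun x => (1 + V x) * exp (-1 - V x)) μ := by
  refine (h.const_mul 2).mono' (by fun_prop) (.of_forall fun x => ?_)
  have : 0 ≤ V x := hV0 x
  rw [norm_of_nonneg (by positivity)]
  exact one_add_mul_exp_neg_one_sub_le (V x)

lemma lintegral_mul_max_neg_log_le (hV : Measurable V) (hV0 : 0 ≤ V) {ρ : Ω → ℝ}
    (hρ : 0 ≤ ρ) :
    ∫⁻ x, ENNReal.ofReal (ρ x * max (-log (ρ x)) 0) ∂μ
      ≤ ∫⁻ x, ENNReal.ofReal (V x * ρ x) ∂μ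
        + ∫⁻ x, ENNReal.ofReal (exp (-1 - V x)) ∂μ := by
  rw [← lintegral_add_right _ (by fun_prop)]
  refine lintegral_mono fun x => ?_
  rw [← ENNReal.ofReal_add (mul_nonneg (hV0 x) (hρ x)) (exp_pos _).le]
  exact ENNReal.ofReal_le_ofReal (mul_max_neg_log_le (hρ x) (hV0 x))

lemma lintegral_exp_neg_one_sub_le (hV0 : 0 ≤ V)
    (h : Integrable (fun x => (1 + V x) * exp (-1 - V x)) μ) :
    ∫⁻ x, ENNReal.ofReal (exp (-1 - V x)) ∂μ
      ≤ ENNReal.ofReal (∫ x, (1 + V x) * exp (-1 - V x) ∂μ) := by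
  rw [ofReal_integral_eq_lintegral_ofReal h
    (.of_forall fun x => by have : 0 ≤ V x := hV0 x; positivity)]
  refine lintegral_mono fun x => ENNReal.ofReal_le_ofReal ?_
  have : 0 ≤ V x := hV0 x
  nlinarith [exp_pos (-1 - V x)]

end MeasureTheory

/-- key entropy estimate in Proposition B.1: for measurable
`g : ℝ^d → [0,∞)` with `∫exp(−βg) < ∞` for all `β > 0` and any `α > 0`, the constant
`C(α) = 1 + ∫∫(1 + αg(θ) + α|r|²/2)e^{−1−αg(θ)−α|r|²/2}dθdr` is finite, and every
probability density `ρ` on `ℝ^d × ℝ^d` satisfies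
`∫∫ρ log⁻ρ ≤ α∫∫(g(θ)+|r|²/2)ρ + C(α)` (both sides valued in `[0,∞]`). -/
theorem stmt_10 {d : ℕ} (g : EuclideanSpace ℝ (Fin d) → ℝ)
    (hg0 : ∀ θ, 0 ≤ g θ) (hgmeas : Measurable g)
    (hgint : ∀ β : ℝ, 0 < β → Integrable fun θ => Real.exp (-β * g θ))
    (α : ℝ) (hα : 0 < α) :
    (Integrable fun p : EuclideanSpace ℝ (Fin d) × EuclideanSpace ℝ (Fin d) =>
      (1 + α * g p.1 + α * (‖p.2‖ ^ 2 / 2)) *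
        Real.exp (-1 - α * g p.1 - α * (‖p.2‖ ^ 2 / 2))) ∧
    ∀ ρ : EuclideanSpace ℝ (Fin d) × EuclideanSpace ℝ (Fin d) → ℝ,
      Measurable ρ → 0 ≤ ρ → Integrable ρ → (∫ p, ρ p) = 1 →
      (∫⁻ p, ENNReal.ofReal (ρ p * max (-Real.log (ρ p)) 0))
        ≤ ENNReal.ofReal α *
            (∫⁻ p : EuclideanSpace ℝ (Fin d) × EuclideanSpace ℝ (Fin d),
              ENNReal.ofReal ((g p.1 + ‖p.2‖ ^ 2 / 2) * ρ p))
          + ENNReal.ofReal (1 + ∫ p : EuclideanSpace ℝ (Fin d) × EuclideanSpace ℝ (Fin d),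
              (1 + α * g p.1 + α * (‖p.2‖ ^ 2 / 2)) *
                Real.exp (-1 - α * g p.1 - α * (‖p.2‖ ^ 2 / 2))) := by
  set W : EuclideanSpace ℝ (Fin d) × EuclideanSpace ℝ (Fin d) → ℝ :=
    fun p => g p.1 + ‖p.2‖ ^ 2 / 2
  have hW0 : 0 ≤ W := fun p => add_nonneg (hg0 p.1) (by positivity)
  have hW : Measurable W := by fun_prop
  have hV0 : 0 ≤ fun p => α * W p := fun p => mul_nonneg hα.le (hW0 p)
  have hC : Integrable fun p => (1 + α * W p) * exp (-1 - α * W p) := by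
    refine Integrable.one_add_mul_exp_neg_one_sub (by fun_prop) hV0 ?_
    refine (((hgint (α / 2) (by positivity)).mul_prod
      (integrable_exp_neg_mul_norm_sq (b := α / 4) (by positivity))).congr
      (.of_forall fun p => ?_))
    simp only [W, ← exp_add]
    ring_nf
  have hform : ∀ p : EuclideanSpace ℝ (Fin d) × EuclideanSpace ℝ (Fin d),
      (1 + α * g p.1 + α * (‖p.2‖ ^ 2 / 2)) * exp (-1 - α * g p.1 - α * (‖p.2‖ ^ 2 / 2))
        = (1 + α * W p) * exp (-1 - α * W p) := fun p => by simp only [W]; ring_nf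
  simp only [hform]
  refine ⟨hC, fun ρ _ hρ _ _ => ?_⟩
  have hαW : ∀ p,
      ENNReal.ofReal (α * W p * ρ p) = ENNReal.ofReal α * ENNReal.ofReal (W p * ρ p) :=
    fun p => by rw [mul_assoc, ENNReal.ofReal_mul hα.le]
  calc _ ≤ _ := lintegral_mul_max_neg_log_le (by fun_prop) hV0 hρ
    _ ≤ _ := by
      simp only [hαW, lintegral_const_mul' _ _ ENNReal.ofReal_ne_top]
      gcongr
      exact (lintegral_exp_neg_one_sub_le hV0 hC).trans
        (ENNReal.ofReal_le_ofReal (by linarith))
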